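/- Let k be algebraically closed of characteristic 3 with ξ a primitive fifth root of unity. Let G₁ ≤ PGL(2,k) be generated by [[1,1],[0,1]] and [[1,0],[0,-1]], and G₂ ≤ PGL(2,k) be generated by [[ξ,0],[0,1]] and [[0,1],[1,0]]. Then G₁ ∩ G₂ = {1}. -/

import Mathlib

/-! Lift both groups to `GL(2,k)`. There `G₁` lies in the upper triangular matrices with
entries in `𝔽₃`, and `G₂` in the monomial matrices whose two nonzero entries have equal fifth
powers. A common element of `G₁` and `G₂` is therefore represented by `diag(a, d)` with
`a, d ∈ 𝔽₃ˣ` and `a⁵ = d⁵`; as `x⁵ = x` on `𝔽₃`, this forces `a = d`, a scalar matrix. -/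

open scoped LinearAlgebra.Projectivization
open Matrix Projectivization

noncomputable section

/-- The projective general linear group `PGL(2,k)`: `GL(2,k)` modulo its center. -/
abbrev PGL2 (k : Type) [Field k] : Type := GL (Fin 2) k ⧸ Subgroup.center (GL (Fin 2) k)

variable {k : Type} [Field k]

open scoped Classical in
/-- The class in `PGL(2,k)` of a nonsingular 2×2 matrix (junk value `1` if singular). -/
def pgl (M : Matrix (Fin 2) (Fin 2) k) : PGL2 k :=
  if h : M.det ≠ 0 then QuotientGroup.mk (Matrix.GeneralLinearGroup.mkOfDetNeZero M h)
  else 1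

/-- The projective line `P¹(k)`. -/
abbrev P1 (k : Type) [Field k] := ℙ k (Fin 2 → k)

/-- The linear automorphism of `k²` given by a matrix in `GL(2,k)`. -/
def glLinEquiv (g : GL (Fin 2) k) : (Fin 2 → k) ≃ₗ[k] (Fin 2 → k) :=
  LinearMap.GeneralLinearGroup.generalLinearEquiv k (Fin 2 → k)
    (Matrix.GeneralLinearGroup.toLin g)

lemma glLinEquiv_apply (g : GL (Fin 2) k) (v : Fin 2 → k) :
    glLinEquiv g v = Matrix.mulVecLin g.val v := rfl

/-- `GL(2,k)` acts on `P¹(k)` by fractional linear transformations. -/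
instance glAction : MulAction (GL (Fin 2) k) (P1 k) where
  smul g x := x.map (glLinEquiv g).toLinearMap (glLinEquiv g).injective
  one_smul x := by
    show Projectivization.map _ _ x = x
    have h1 : glLinEquiv (1 : GL (Fin 2) k) = LinearEquiv.refl k _ := by
      simp only [glLinEquiv, _root_.map_one]; rfl
    induction' x using Projectivization.ind with v hv
    rw [Projectivization.map_mk]
    simp [h1]
  mul_smul g h x := by
    show Projectivization.map _ _ x =
      Projectivization.map _ _ (Projectivization.map _ _ x)
    have hgh : glLinEquiv (g * h) = (glLinEquiv h).trans (glLinEquiv g) := by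
      simp only [glLinEquiv, _root_.map_mul]; rfl
    induction' x using Projectivization.ind with v hv
    simp only [Projectivization.map_mk, hgh]
    rfl

lemma gl_smul_mk (g : GL (Fin 2) k) (v : Fin 2 → k) (hv : v ≠ 0) :
    g • Projectivization.mk k v hv =
      Projectivization.mk k (glLinEquiv g v) ((glLinEquiv g).map_ne_zero_iff.mpr hv) :=
  rfl

/-- Central (i.e. scalar) matrices act trivially on `P¹(k)`. -/
lemma central_smul_triv (c : GL (Fin 2) k) (hc : c ∈ Subgroup.center (GL (Fin 2) k))
    (x : P1 k) : c • x = x := by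
  obtain ⟨r, hr⟩ : c.val ∈ Set.range (Matrix.scalar (Fin 2)) := by
    refine Matrix.mem_range_scalar_of_commute_transvectionStruct (fun t => ?_)
    have htGL : (Matrix.GeneralLinearGroup.mkOfDetNeZero t.toMatrix
        (by rw [t.det]; exact one_ne_zero) : GL (Fin 2) k) * c =
        c * Matrix.GeneralLinearGroup.mkOfDetNeZero t.toMatrix
        (by rw [t.det]; exact one_ne_zero) :=
      (Subgroup.mem_center_iff.mp hc) _
    exact congrArg Units.val htGL
  have hr0 : r ≠ 0 := by
    rintro rfl
    have hu : IsUnit c.val.det := (Matrix.isUnit_iff_isUnit_det _).mp c.isUnit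
    rw [← hr] at hu
    simp at hu
  induction' x using Projectivization.ind with v hv
  rw [gl_smul_mk]
  apply (Projectivization.mk_eq_mk_iff' k _ _ _ hv).mpr
  refine ⟨r, ?_⟩
  rw [glLinEquiv_apply, ← hr]
  funext j
  simp [Matrix.mulVec_diagonal]

/-- The action of `GL(2,k)` on `P¹(k)` descends to `PGL(2,k)`. -/
instance pglAction : MulAction (PGL2 k) (P1 k) where
  smul g x := Quotient.liftOn' g (fun A => A • x) (by
    intro a b hab
    rw [QuotientGroup.leftRel_apply] at hab
    have : b = a * (a⁻¹ * b) := by group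
    show a • x = b • x
    rw [this, mul_smul, central_smul_triv _ hab])
  one_smul x := by
    show (1 : GL (Fin 2) k) • x = x
    exact MulAction.one_smul x
  mul_smul a b x := by
    refine Quotient.inductionOn₂' a b (fun A B => ?_)
    show (A * B) • x = A • (B • x)
    exact mul_smul A B x

/-- The point `(a : 1)` of `P¹(k)`. -/
def pt (a : k) : P1 k := Projectivization.mk k ![a, 1] (by
  intro h; simpa using congrFun h 1)

/-- The point at infinity `(1 : 0)` of `P¹(k)`. -/
def inftyPt : P1 k := Projectivization.mk k ![1, 0] (by
  intro h; simpa using congrFun h 0)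

lemma GL2.coe_inv_fin_two (g : GL (Fin 2) k) :
    ((g⁻¹ : GL (Fin 2) k) : Matrix (Fin 2) (Fin 2) k) =
      (g.val.det)⁻¹ • !![g 1 1, -g 0 1; -g 1 0, g 0 0] := by
  rw [GeneralLinearGroup.coe_inv, inv_def, adjugate_fin_two, Ring.inverse_eq_inv']

variable (k) in
def GL2.borel : Subgroup (GL (Fin 2) k) where
  carrier := {g | g 1 0 = 0}
  one_mem' := by simp
  mul_mem' {g h} hg hh := by
    simp_all [mul_apply, Fin.sum_univ_two]
  inv_mem' {g} hg := by
    simp only [Set.mem_ofPred_eq, GL2.coe_inv_fin_two] at *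
    simp [hg]

lemma GL2.mem_borel {g : GL (Fin 2) k} : g ∈ GL2.borel k ↔ g 1 0 = 0 := Iff.rfl

variable (k) in
def GL2.frobeniusFixed (p : ℕ) [ExpChar k p] : Subgroup (GL (Fin 2) k) :=
  (GeneralLinearGroup.map (frobenius k p)).eqLocus (MonoidHom.id _)

lemma GL2.mem_frobeniusFixed {p : ℕ} [ExpChar k p] {g : GL (Fin 2) k} :
    g ∈ GL2.frobeniusFixed k p ↔ ∀ i j, frobenius k p (g i j) = g i j := by
  change GeneralLinearGroup.map _ g = g ↔ _
  simp [GeneralLinearGroup.ext_iff, GeneralLinearGroup.map_apply]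

variable (k) in
/-- The preimage in `GL(2,k)` of the dihedral group `{x ↦ ζ x, x ↦ ζ / x | ζ ^ n = 1}`. -/
def GL2.dihedral (n : ℕ) : Subgroup (GL (Fin 2) k) where
  carrier := {g | (g 0 1 = 0 ∧ g 1 0 = 0 ∧ g 0 0 ^ n = g 1 1 ^ n) ∨
    (g 0 0 = 0 ∧ g 1 1 = 0 ∧ g 0 1 ^ n = g 1 0 ^ n)}
  one_mem' := by simp
  mul_mem' {g h} hg hh := by
    simp only [Set.mem_ofPred_eq, GeneralLinearGroup.coe_mul, mul_apply, Fin.sum_univ_two] at *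
    rcases hg with ⟨hg01, hg10, hg⟩ | ⟨hg00, hg11, hg⟩ <;>
    rcases hh with ⟨hh01, hh10, hh⟩ | ⟨hh00, hh11, hh⟩ <;>
    simp [*, mul_pow]
  inv_mem' {g} hg := by
    simp only [Set.mem_ofPred_eq, GL2.coe_inv_fin_two] at *
    rcases hg with ⟨hg01, hg10, hg⟩ | ⟨hg00, hg11, hg⟩
    · left
      simp [hg01, hg10, mul_pow, hg]
    · right
      simp only [hg00, hg11, Matrix.smul_apply, of_apply, cons_val', cons_val_zero, cons_val_one,
        cons_val_fin_one, smul_eq_mul, mul_zero, mul_neg, true_and]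
      rw [neg_pow, neg_pow (_ * _), mul_pow, mul_pow, hg]

lemma pgl_mem_map {H : Subgroup (GL (Fin 2) k)} {M : Matrix (Fin 2) (Fin 2) k} (hM : M.det ≠ 0)
    (hMH : GeneralLinearGroup.mkOfDetNeZero M hM ∈ H) :
    pgl M ∈ H.map (QuotientGroup.mk' (Subgroup.center (GL (Fin 2) k))) := by
  rw [pgl, dif_pos hM]
  exact ⟨_, hMH, rfl⟩

lemma GL2.map_borel_inf_frobeniusFixed_inf_map_dihedral_eq_bot [CharP k 3] :
    (GL2.borel k ⊓ GL2.frobeniusFixed k 3).map (QuotientGroup.mk' (Subgroup.center _)) ⊓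
      (GL2.dihedral k 5).map (QuotientGroup.mk' (Subgroup.center _)) = ⊥ := by
  rw [eq_bot_iff]
  rintro _ ⟨⟨A, ⟨hA₁, hA₂⟩, rfl⟩, B, hB, hBA⟩
  obtain ⟨_, hz, rfl⟩ := (QuotientGroup.mk'_eq_mk' _).1 hBA
  rw [GeneralLinearGroup.center_eq_range_scalar] at hz
  obtain ⟨u, rfl⟩ := hz
  have hentry : ∀ i j,
      (B * GeneralLinearGroup.scalar (Fin 2) u : GL (Fin 2) k) i j = B i j * u := by
    simp
  rw [Subgroup.mem_bot, QuotientGroup.mk'_apply, QuotientGroup.eq_one_iff,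
    GeneralLinearGroup.mem_center_iff_val_mem_range_scalar]
  have hB10 : B 1 0 = 0 := by simpa [hentry, u.ne_zero] using GL2.mem_borel.1 hA₁
  have hcube : ∀ i j, (B i j * u) ^ 3 = B i j * u := fun i j => by
    simpa [hentry, frobenius_def] using GL2.mem_frobeniusFixed.1 hA₂ i j
  rcases hB with ⟨hB01, -, hB5⟩ | ⟨hB00, hB11, -⟩
  · have hfifth : ∀ x : k, x ^ 3 = x → x ^ 5 = x := fun x hx => by
      linear_combination (x ^ 2 + 1) * hx
    have hdiag : B 0 0 * u = B 1 1 * u := by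
      rw [← hfifth _ (hcube 0 0), ← hfifth _ (hcube 1 1), mul_pow, mul_pow, hB5]
    refine ⟨B 1 1 * u, ?_⟩
    ext i j
    fin_cases i <;> fin_cases j <;> simp [hentry, hdiag, hB01, hB10]
  · exact absurd (det_fin_two B.val) (by simp [B.det_ne_zero, hB00, hB11, hB10])

theorem stmt_5_general (k : Type) [Field k] [CharP k 3]
    (ξ : k) (hξ : IsPrimitiveRoot ξ 5)
    (G₁ G₂ : Subgroup (PGL2 k))
    (hG₁ : G₁ = Subgroup.closure {pgl !![(1:k), 1; 0, 1], pgl !![(1:k), 0; 0, -1]})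
    (hG₂ : G₂ = Subgroup.closure {pgl !![ξ, 0; 0, 1], pgl !![(0:k), 1; 1, 0]}) :
    G₁ ⊓ G₂ = ⊥ := by
  have hξ0 : ξ ≠ 0 := hξ.ne_zero (by norm_num)
  subst hG₁ hG₂
  refine eq_bot_iff.2 ((inf_le_inf ?_ ?_).trans
    GL2.map_borel_inf_frobeniusFixed_inf_map_dihedral_eq_bot.le)
  all_goals rw [Subgroup.closure_le, Set.insert_subset_iff, Set.singleton_subset_iff]
  · constructor <;>
      exact pgl_mem_map (by simp) ⟨by simp [GL2.mem_borel], GL2.mem_frobeniusFixed.2 (by simp)⟩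
  · constructor
    · refine pgl_mem_map (by simp [hξ0]) (Or.inl ?_)
      simp [hξ.pow_eq_one]
    · refine pgl_mem_map (by simp) (Or.inr ?_)
      simp

/-- With `k` algebraically closed of characteristic 3 and `ξ` a primitive fifth
root of unity, the subgroups `G₁ = ⟨[[1,1],[0,1]], [[1,0],[0,-1]]⟩` and
`G₂ = ⟨[[ξ,0],[0,1]], [[0,1],[1,0]]⟩` of `PGL(2,k)` intersect trivially. -/
theorem stmt_5 (k : Type) [Field k] [IsAlgClosed k] [CharP k 3]
    (ξ : k) (hξ : IsPrimitiveRoot ξ 5)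
    (G₁ G₂ : Subgroup (PGL2 k))
    (hG₁ : G₁ = Subgroup.closure {pgl !![(1:k), 1; 0, 1], pgl !![(1:k), 0; 0, -1]})
    (hG₂ : G₂ = Subgroup.closure {pgl !![ξ, 0; 0, 1], pgl !![(0:k), 1; 1, 0]}) :
    G₁ ⊓ G₂ = ⊥ :=
  stmt_5_general k ξ hξ G₁ G₂ hG₁ hG₂
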